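/- Suppose all eight inclusions hold: R(Cᵀ) ⊆ R(Aᵀ), R(B) ⊆ R(A), R((A†B)ᵀ) ⊆ R(Fᵀ), R(CA†) ⊆ R(F), R(C) ⊆ R(D), R(Bᵀ) ⊆ R(Dᵀ), R(BD†) ⊆ R(G), R((D†C)ᵀ) ⊆ R(Gᵀ), where F = D - CA†B and G = A - BD†C. Then G† = A† + A†BF†CA†. -/

import Mathlib

open Matrix LinearMap

/-- `X` is the Moore-Penrose inverse of `A`. -/
def IsMoorePenrose {α β : Type*} [Fintype α] [Fintype β] [DecidableEq α] [DecidableEq β]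
    (A : Matrix α β ℝ) (X : Matrix β α ℝ) : Prop :=
  A * X * A = A ∧ X * A * X = X ∧ (A * X)ᵀ = A * X ∧ (X * A)ᵀ = X * A

/-!
If `A X A = A`, then `R(M) ⊆ R(A)` makes `M` absorb `A X` on the left, and `R(Mᵀ) ⊆ R(Aᵀ)` makes
it absorb `X A` on the right; this turns the range inclusions into identities like `A A† B = B`.
With `F = D - C A† B` and `G = A - B D† C` they give `G (A† B) = B D† F` and `C A† G = F D† C`,
hence `X = A† + A† B F† C A†` satisfies `G X = A A†` and `X G = A† A`. The Penrose equations of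
`(G, X)` then follow from those of `(A, A†)`, and uniqueness of the Moore-Penrose inverse gives
`G† = X`.
-/

namespace Matrix

variable {l m o : Type*} [Fintype m] [Fintype o] [DecidableEq o] {R : Type*} [CommSemiring R]

theorem exists_eq_mul_of_range_mulVecLin_le {A : Matrix l m R} {M : Matrix l o R}
    (h : range M.mulVecLin ≤ range A.mulVecLin) : ∃ W : Matrix m o R, M = A * W := by
  choose w hw using fun j => h ⟨Pi.single j 1, rfl⟩
  refine ⟨(of w)ᵀ, ?_⟩
  ext i j
  have := congrFun (hw j) i
  rw [mulVecLin_apply, mulVecLin_apply, mulVec_single_one] at this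
  rw [← col_apply M j i, ← this]
  rfl

theorem mul_mul_eq_of_range_mulVecLin_le [Fintype l] {A : Matrix l m R} {X : Matrix m l R}
    (hA : A * X * A = A) {M : Matrix l o R} (h : range M.mulVecLin ≤ range A.mulVecLin) :
    A * X * M = M := by
  obtain ⟨W, rfl⟩ := exists_eq_mul_of_range_mulVecLin_le h
  rw [← Matrix.mul_assoc, hA]

theorem mul_mul_eq_of_range_mulVecLin_transpose_le [Fintype l] {A : Matrix m l R}
    {X : Matrix l m R} (hA : A * X * A = A) {M : Matrix o l R}
    (h : range Mᵀ.mulVecLin ≤ range Aᵀ.mulVecLin) : M * X * A = M := by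
  obtain ⟨W, hW⟩ := exists_eq_mul_of_range_mulVecLin_le h
  rw [← transpose_transpose M, hW, transpose_mul, transpose_transpose, Matrix.mul_assoc,
    Matrix.mul_assoc, ← Matrix.mul_assoc A, hA]

end Matrix

section MoorePenrose

variable {l m n o : Type*} [Fintype l] [Fintype m] [Fintype n] [Fintype o]
  [DecidableEq m] [DecidableEq n]

theorem IsMoorePenrose.unique {A : Matrix m n ℝ} {X Y : Matrix n m ℝ}
    (hX : IsMoorePenrose A X) (hY : IsMoorePenrose A Y) : X = Y := by
  obtain ⟨hAXA, hXAX, hAX, hXA⟩ := hX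
  obtain ⟨hAYA, hYAY, hAY, hYA⟩ := hY
  have hAX_eq : A * X = A * Y := by
    calc A * X = (A * Y * A * X)ᵀ := by rw [hAYA, hAX]
      _ = A * X * (A * Y) := by rw [Matrix.mul_assoc (A * Y), transpose_mul, hAX, hAY]
      _ = A * Y := by rw [← Matrix.mul_assoc, hAXA]
  have hXA_eq : X * A = Y * A := by
    calc X * A = (X * A * Y * A)ᵀ := by rw [Matrix.mul_assoc X, Matrix.mul_assoc X, hAYA, hXA]
      _ = Y * A * (X * A) := by rw [Matrix.mul_assoc (X * A) Y, transpose_mul, hXA, hYA]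
      _ = Y * A := by rw [← Matrix.mul_assoc, Matrix.mul_assoc Y, Matrix.mul_assoc Y, hAXA]
  calc X = Y * A * X := by rw [← hXA_eq, hXAX]
    _ = Y := by rw [Matrix.mul_assoc, hAX_eq, ← Matrix.mul_assoc, hYAY]

theorem IsMoorePenrose.of_mul_eq {A : Matrix m n ℝ} {Ad : Matrix n m ℝ} {G : Matrix m n ℝ}
    {X : Matrix n m ℝ} (hA : IsMoorePenrose A Ad) (hGX : G * X = A * Ad) (hXG : X * G = Ad * A)
    (hG : A * Ad * G = G) (hX : Ad * A * X = X) : IsMoorePenrose G X :=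
  ⟨by rw [hGX, hG], by rw [hXG, hX], by rw [hGX, hA.2.2.1], by rw [hXG, hA.2.2.2]⟩

theorem IsMoorePenrose.sub_mul_mul {A : Matrix m n ℝ} {B : Matrix m o ℝ} {C : Matrix l n ℝ}
    {D F : Matrix l o ℝ} {Ad : Matrix n m ℝ} {Dd Fd : Matrix o l ℝ} (hA : IsMoorePenrose A Ad)
    (hF : C * Ad * B = D - F) (hB : A * Ad * B = B) (hC : C * Ad * A = C)
    (hBF : Ad * B * Fd * F = Ad * B) (hCF : F * Fd * (C * Ad) = C * Ad)
    (hDC : D * Dd * C = C) (hBD : B * Dd * D = B) :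
    IsMoorePenrose (A - B * Dd * C) (Ad + Ad * B * Fd * C * Ad) := by
  set G := A - B * Dd * C
  have hGB : G * (Ad * B) = B * Dd * F := by
    calc G * (Ad * B) = A * Ad * B - B * Dd * (C * Ad * B) := by
          simp only [G, Matrix.sub_mul, Matrix.mul_assoc]
      _ = B * Dd * F := by rw [hB, hF, Matrix.mul_sub, hBD, sub_sub_cancel]
  have hCG : C * Ad * G = F * Dd * C := by
    calc C * Ad * G = C * Ad * A - C * Ad * B * (Dd * C) := by
          simp only [G, Matrix.mul_sub, Matrix.mul_assoc]
      _ = F * Dd * C := by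
          rw [hC, hF, Matrix.sub_mul, ← Matrix.mul_assoc, hDC, sub_sub_cancel, Matrix.mul_assoc]
  refine hA.of_mul_eq ?_ ?_ ?_ ?_
  · calc G * (Ad + Ad * B * Fd * C * Ad) = G * Ad + G * (Ad * B) * Fd * (C * Ad) := by
          simp only [Matrix.mul_add, Matrix.mul_assoc]
      _ = G * Ad + B * Dd * (F * Fd * (C * Ad)) := by rw [hGB]; simp only [Matrix.mul_assoc]
      _ = A * Ad := by rw [hCF]; simp only [G, Matrix.sub_mul, Matrix.mul_assoc]; abel
  · calc (Ad + Ad * B * Fd * C * Ad) * G = Ad * G + Ad * B * Fd * (C * Ad * G) := by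
          simp only [Matrix.add_mul, Matrix.mul_assoc]
      _ = Ad * G + Ad * B * Fd * F * (Dd * C) := by rw [hCG]; simp only [Matrix.mul_assoc]
      _ = Ad * A := by rw [hBF]; simp only [G, Matrix.mul_sub, Matrix.mul_assoc]; abel
  · rw [Matrix.mul_sub, hA.1, ← Matrix.mul_assoc, ← Matrix.mul_assoc, hB]
  · simp only [Matrix.mul_add, ← Matrix.mul_assoc, hA.2.1]

end MoorePenrose

theorem stmt7_general
    {m n s p : ℕ}
    (A : Matrix (Fin m) (Fin n) ℝ) (B : Matrix (Fin m) (Fin p) ℝ)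
    (C : Matrix (Fin s) (Fin n) ℝ) (D : Matrix (Fin s) (Fin p) ℝ)
    (Ad : Matrix (Fin n) (Fin m) ℝ) (hA : IsMoorePenrose A Ad)
    (Dd : Matrix (Fin p) (Fin s) ℝ) (hD : IsMoorePenrose D Dd)
    (Fd : Matrix (Fin p) (Fin s) ℝ) (hF : IsMoorePenrose (D - C * Ad * B) Fd)
    (Gd : Matrix (Fin n) (Fin m) ℝ) (hG : IsMoorePenrose (A - B * Dd * C) Gd)
    (hCt : LinearMap.range (Matrix.mulVecLin (Cᵀ)) ≤ LinearMap.range (Matrix.mulVecLin (Aᵀ)))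
    (hB : LinearMap.range (Matrix.mulVecLin (B)) ≤ LinearMap.range (Matrix.mulVecLin (A)))
    (hAB : LinearMap.range (Matrix.mulVecLin ((Ad * B)ᵀ)) ≤ LinearMap.range (Matrix.mulVecLin ((D - C * Ad * B)ᵀ)))
    (hCA : LinearMap.range (Matrix.mulVecLin (C * Ad)) ≤ LinearMap.range (Matrix.mulVecLin (D - C * Ad * B)))
    (hC : LinearMap.range (Matrix.mulVecLin (C)) ≤ LinearMap.range (Matrix.mulVecLin (D)))
    (hBt : LinearMap.range (Matrix.mulVecLin (Bᵀ)) ≤ LinearMap.range (Matrix.mulVecLin (Dᵀ)))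
 :
    Gd = Ad + Ad * B * Fd * C * Ad :=
  hG.unique <| hA.sub_mul_mul (sub_sub_cancel D _).symm
    (mul_mul_eq_of_range_mulVecLin_le hA.1 hB)
    (mul_mul_eq_of_range_mulVecLin_transpose_le hA.1 hCt)
    (mul_mul_eq_of_range_mulVecLin_transpose_le hF.1 hAB)
    (mul_mul_eq_of_range_mulVecLin_le hF.1 hCA)
    (mul_mul_eq_of_range_mulVecLin_le hD.1 hC)
    (mul_mul_eq_of_range_mulVecLin_transpose_le hD.1 hBt)

theorem stmt7
    {m n s p : ℕ}
    (A : Matrix (Fin m) (Fin n) ℝ) (B : Matrix (Fin m) (Fin p) ℝ)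
    (C : Matrix (Fin s) (Fin n) ℝ) (D : Matrix (Fin s) (Fin p) ℝ)
    (Ad : Matrix (Fin n) (Fin m) ℝ) (hA : IsMoorePenrose A Ad)
    (Dd : Matrix (Fin p) (Fin s) ℝ) (hD : IsMoorePenrose D Dd)
    (Fd : Matrix (Fin p) (Fin s) ℝ) (hF : IsMoorePenrose (D - C * Ad * B) Fd)
    (Gd : Matrix (Fin n) (Fin m) ℝ) (hG : IsMoorePenrose (A - B * Dd * C) Gd)
    (hCt : LinearMap.range (Matrix.mulVecLin (Cᵀ)) ≤ LinearMap.range (Matrix.mulVecLin (Aᵀ)))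
    (hB : LinearMap.range (Matrix.mulVecLin (B)) ≤ LinearMap.range (Matrix.mulVecLin (A)))
    (hAB : LinearMap.range (Matrix.mulVecLin ((Ad * B)ᵀ)) ≤ LinearMap.range (Matrix.mulVecLin ((D - C * Ad * B)ᵀ)))
    (hCA : LinearMap.range (Matrix.mulVecLin (C * Ad)) ≤ LinearMap.range (Matrix.mulVecLin (D - C * Ad * B)))
    (hC : LinearMap.range (Matrix.mulVecLin (C)) ≤ LinearMap.range (Matrix.mulVecLin (D)))
    (hBt : LinearMap.range (Matrix.mulVecLin (Bᵀ)) ≤ LinearMap.range (Matrix.mulVecLin (Dᵀ)))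
    (hBD : LinearMap.range (Matrix.mulVecLin (B * Dd)) ≤ LinearMap.range (Matrix.mulVecLin (A - B * Dd * C)))
    (hDC : LinearMap.range (Matrix.mulVecLin ((Dd * C)ᵀ)) ≤ LinearMap.range (Matrix.mulVecLin ((A - B * Dd * C)ᵀ)))
 :
    Gd = Ad + Ad * B * Fd * C * Ad :=
  stmt7_general A B C D Ad hA Dd hD Fd hF Gd hG hCt hB hAB hCA hC hBt
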